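/- Let η₀ : ℝ → ℝ be a smooth even bump function with 0 ≤ η₀ ≤ 1, η₀ = 1 on [-ρ/2, ρ/2] and η₀ = 0 outside (-ρ, ρ). Given points 0 = x₀ < x₁ < ⋯ < xₙ < x_{n+1} = 1 with min gap at least 2ρ, signs αₗ ∈ {-1,1} with αₗ α_{l+1} < 0, and βₗ ∈ {-1,0,1} with β₀ = β_{n+1} = 0, the function w(x) = Σₗ η₀(x - xₗ)(αₗ(x - xₗ) + (βₗ/2)(x - xₗ)²) + Σ_{l=0}^{n} αₗ 1_{[xₗ, x_{l+1})}(x) (1 - η₀(x - xₗ) - η₀(x - x_{l+1})) is C^∞ on [0,1], vanishes exactly at x₀, …, x_{n+1}, and satisfies w'(xₗ) = αₗ and w''(xₗ) = βₗ for all l. -/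

import Mathlib

set_option maxHeartbeats 1600000


theorem initial_data_construction (n : ℕ) (ρ : ℝ) (hρ : 0 < ρ)
    (x : ℕ → ℝ) (hx0 : x 0 = 0) (hxn : x (n+1) = 1)
    (hmono : ∀ l ≤ n, x l < x (l+1))
    (hgap : ∀ l ≤ n, 2 * ρ ≤ x (l+1) - x l)
    (α : ℕ → ℝ) (hα : ∀ l ≤ n+1, α l = 1 ∨ α l = -1)
    (hαalt : ∀ l ≤ n, α l * α (l+1) < 0)
    (β : ℕ → ℝ) (hβ : ∀ l ≤ n+1, β l = 1 ∨ β l = 0 ∨ β l = -1)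
    (hβ0 : β 0 = 0) (hβn : β (n+1) = 0)
    (η₀ : ℝ → ℝ) (hη : ContDiff ℝ (⊤ : ℕ∞) η₀) (heven : ∀ y : ℝ, η₀ (-y) = η₀ y)
    (h01 : ∀ y : ℝ, 0 ≤ η₀ y ∧ η₀ y ≤ 1)
    (hone : ∀ y ∈ Set.Icc (0:ℝ) (ρ/2), η₀ y = 1)
    (hzero : ∀ y : ℝ, ρ ≤ y → η₀ y = 0)
    (w : ℝ → ℝ)
    (hw : ∀ y : ℝ, w y =
      (∑ l ∈ Finset.range (n+2),
        η₀ (y - x l) * (α l * (y - x l) + β l / 2 * (y - x l)^2))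
      + ∑ l ∈ Finset.range (n+1),
        α l * (Set.Ico (x l) (x (l+1))).indicator (fun _ => (1:ℝ)) y
          * (1 - (η₀ (y - x l) + η₀ (y - x (l+1))))) :
    ContDiffOn ℝ (⊤ : ℕ∞) w (Set.Icc 0 1)
    ∧ (∀ y ∈ Set.Icc (0:ℝ) 1, (w y = 0 ↔ ∃ l ≤ n+1, y = x l))
    ∧ (∀ l ≤ n+1, deriv w (x l) = α l ∧ deriv (deriv w) (x l) = β l) := by
  classical
  -- monotonicity facts
  have hle : ∀ j ≤ n+1, ∀ i ≤ j, x i ≤ x j := by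
    intro j hj
    induction j with
    | zero => intro i hi; have : i = 0 := by omega
              rw [this]
    | succ k ih =>
      intro i hik
      rcases Nat.lt_or_ge i (k+1) with h | h
      · have h1 : x i ≤ x k := ih (by omega) i (by omega)
        have h2 := hmono k (by omega)
        linarith
      · have : i = k + 1 := by omega
        rw [this]
  have hgap' : ∀ i j, i < j → j ≤ n+1 → x i + 2*ρ ≤ x j := by
    intro i j hij hj
    have h1 := hgap i (by omega)
    have h2 := hle j hj (i+1) (by omega)
    linarith
  have hρ2 : ρ ≤ 1/2 := by
    have h1 := hgap 0 (Nat.zero_le n)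
    have h2 := hle (n+1) le_rfl 1 (by omega)
    rw [hxn] at h2
    rw [hx0] at h1
    linarith
  -- bump function facts
  have ηabs1 : ∀ z : ℝ, |z| ≤ ρ/2 → η₀ z = 1 := by
    intro z hz
    rcases le_or_gt 0 z with h | h
    · exact hone z ⟨h, by rwa [abs_of_nonneg h] at hz⟩
    · rw [← heven]
      exact hone (-z) ⟨by linarith, by rwa [abs_of_neg h] at hz⟩
  have ηabs0 : ∀ z : ℝ, ρ ≤ |z| → η₀ z = 0 := by
    intro z hz
    rcases le_or_gt 0 z with h | h
    · exact hzero z (by rwa [abs_of_nonneg h] at hz)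
    · rw [← heven]
      exact hzero (-z) (by rwa [abs_of_neg h] at hz)
  -- sign facts
  have αabs : ∀ l ≤ n+1, |α l| = 1 := by
    intro l hl; rcases hα l hl with h | h <;> rw [h] <;> norm_num
  have αsq : ∀ l ≤ n+1, α l * α l = 1 := by
    intro l hl; rcases hα l hl with h | h <;> rw [h] <;> norm_num
  have αprod : ∀ l ≤ n, α l * α (l+1) = -1 := by
    intro l hl
    have h1 := hα l (by omega)
    have h2 := hα (l+1) (by omega)
    have h3 := hαalt l hl
    rcases h1 with h | h <;> rcases h2 with h' | h' <;>
      rw [h, h'] at h3 ⊢ <;> linarith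
  have βabs : ∀ l ≤ n+1, |β l| ≤ 1 := by
    intro l hl; rcases hβ l hl with h | h | h <;> rw [h] <;> norm_num
  -- Lemma A : near each node, w is the local polynomial
  have lemA : ∀ l ≤ n+1, ∀ y : ℝ, |y - x l| ≤ ρ/2 →
      w y = α l * (y - x l) + β l / 2 * (y - x l)^2 := by
    intro l hl y hy
    obtain ⟨hy1, hy2⟩ := abs_le.mp hy
    rw [hw]
    have h0 : ∀ k ∈ Finset.range (n+2), k ≠ l →
        η₀ (y - x k) * (α k * (y - x k) + β k / 2 * (y - x k)^2) = 0 := by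
      intro k hk hkl
      have hkr : k ≤ n + 1 := by have := Finset.mem_range.mp hk; omega
      have hz : η₀ (y - x k) = 0 := by
        apply ηabs0
        rcases Nat.lt_or_ge k l with h | h
        · have := hgap' k l h hl
          have h2 := le_abs_self (y - x k)
          linarith
        · have h' : l < k := by omega
          have := hgap' l k h' hkr
          rw [abs_sub_comm]
          have h2 := le_abs_self (x k - y)
          linarith
      rw [hz, zero_mul]
    have hs1 := Finset.sum_eq_single_of_mem (s := Finset.range (n+2))
      (f := fun k => η₀ (y - x k) * (α k * (y - x k) + β k / 2 * (y - x k)^2))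
      l (Finset.mem_range.mpr (by omega)) h0
    have hs2 : (∑ m ∈ Finset.range (n+1),
        α m * (Set.Ico (x m) (x (m+1))).indicator (fun _ => (1:ℝ)) y
          * (1 - (η₀ (y - x m) + η₀ (y - x (m+1))))) = 0 := by
      apply Finset.sum_eq_zero
      intro m hm
      have hmn : m ≤ n := Nat.lt_succ_iff.mp (Finset.mem_range.mp hm)
      by_cases hym : y ∈ Set.Ico (x m) (x (m+1))
      · have hlm : l = m ∨ l = m + 1 := by
          by_contra hne
          push_neg at hne
          rcases Nat.lt_or_ge l m with h | h
          · have := hgap' l m h (by omega)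
            have := hym.1
            linarith
          · have h' : m + 1 < l := by omega
            have := hgap' (m+1) l h' hl
            have := hym.2
            linarith
        have hmul : 1 - (η₀ (y - x m) + η₀ (y - x (m+1))) = 0 := by
          rcases hlm with h | h
          · subst h
            have e1 : η₀ (y - x l) = 1 := ηabs1 _ hy
            have e2 : η₀ (y - x (l+1)) = 0 := by
              apply ηabs0
              rw [abs_sub_comm]
              have h2 := le_abs_self (x (l+1) - y)
              have h3 := hgap l hmn
              linarith
            rw [e1, e2]; ring
          · subst h
            have e1 : η₀ (y - x (m+1)) = 1 := ηabs1 _ hy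
            have e2 : η₀ (y - x m) = 0 := by
              apply ηabs0
              have h2 := le_abs_self (y - x m)
              have h3 := hgap m hmn
              linarith
            rw [e1, e2]; ring
        rw [hmul, mul_zero]
      · rw [Set.indicator_of_notMem hym, mul_zero, zero_mul]
    rw [hs1, hs2, add_zero]
    simp only [ηabs1 _ hy, one_mul]
  -- Lemma B : on each (extended) gap, w is a smooth ansatz
  have lemB : ∀ m ≤ n, ∀ y : ℝ, x m - ρ/2 < y → y < x (m+1) + ρ/2 →
      w y = η₀ (y - x m) * (α m * (y - x m) + β m / 2 * (y - x m)^2)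
          + η₀ (y - x (m+1)) * (α (m+1) * (y - x (m+1)) + β (m+1) / 2 * (y - x (m+1))^2)
          + α m * (1 - (η₀ (y - x m) + η₀ (y - x (m+1)))) := by
    intro m hm y hy1 hy2
    rw [hw]
    have hgm := hgap m hm
    -- first sum
    have hsub : ({m, m+1} : Finset ℕ) ⊆ Finset.range (n+2) := by
      intro k hk
      simp only [Finset.mem_insert, Finset.mem_singleton] at hk
      rcases hk with rfl | rfl <;> exact Finset.mem_range.mpr (by omega)
    have hvan : ∀ k ∈ Finset.range (n+2), k ∉ ({m, m+1} : Finset ℕ) →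
        η₀ (y - x k) * (α k * (y - x k) + β k / 2 * (y - x k)^2) = 0 := by
      intro k hk hk'
      simp only [Finset.mem_insert, Finset.mem_singleton, not_or] at hk'
      have hkr : k ≤ n + 1 := by have := Finset.mem_range.mp hk; omega
      have hz : η₀ (y - x k) = 0 := by
        apply ηabs0
        rcases Nat.lt_or_ge k m with h | h
        · have := hgap' k m h (by omega)
          have h2 := le_abs_self (y - x k)
          linarith
        · have h' : m + 1 < k := by omega
          have := hgap' (m+1) k h' hkr
          rw [abs_sub_comm]
          have h2 := le_abs_self (x k - y)
          linarith
      rw [hz, zero_mul]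
    have hs1 : (∑ k ∈ Finset.range (n+2),
        η₀ (y - x k) * (α k * (y - x k) + β k / 2 * (y - x k)^2))
        = η₀ (y - x m) * (α m * (y - x m) + β m / 2 * (y - x m)^2)
          + η₀ (y - x (m+1)) * (α (m+1) * (y - x (m+1)) + β (m+1) / 2 * (y - x (m+1))^2) := by
      rw [← Finset.sum_subset hsub hvan, Finset.sum_pair (by omega : m ≠ m+1)]
    -- second sum
    have hs2 : (∑ l ∈ Finset.range (n+1),
        α l * (Set.Ico (x l) (x (l+1))).indicator (fun _ => (1:ℝ)) y
          * (1 - (η₀ (y - x l) + η₀ (y - x (l+1)))))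
        = α m * (1 - (η₀ (y - x m) + η₀ (y - x (m+1)))) := by
      by_cases hy' : y ∈ Set.Ico (x m) (x (m+1))
      · have h0 : ∀ l ∈ Finset.range (n+1), l ≠ m →
            α l * (Set.Ico (x l) (x (l+1))).indicator (fun _ => (1:ℝ)) y
              * (1 - (η₀ (y - x l) + η₀ (y - x (l+1)))) = 0 := by
          intro l hl hlm
          have hln : l ≤ n := Nat.lt_succ_iff.mp (Finset.mem_range.mp hl)
          have hyl : y ∉ Set.Ico (x l) (x (l+1)) := by
            intro hyl
            rcases Nat.lt_or_ge l m with h | h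
            · have h2 := hle m (by omega) (l+1) (by omega)
              have := hyl.2
              have := hy'.1
              linarith
            · have hlm' : m < l := lt_of_le_of_ne h (Ne.symm hlm)
              have h2 := hle l (by omega) (m+1) (by omega)
              have := hyl.1
              have := hy'.2
              linarith
          rw [Set.indicator_of_notMem hyl, mul_zero, zero_mul]
        have := Finset.sum_eq_single_of_mem (s := Finset.range (n+1))
          (f := fun l => α l * (Set.Ico (x l) (x (l+1))).indicator (fun _ => (1:ℝ)) y
            * (1 - (η₀ (y - x l) + η₀ (y - x (l+1)))))
          m (Finset.mem_range.mpr (by omega)) h0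
        rw [this]
        simp only [Set.indicator_of_mem hy', mul_one]
      · rw [Set.mem_Ico, not_and_or, not_le, not_lt] at hy'
        have hRHS : 1 - (η₀ (y - x m) + η₀ (y - x (m+1))) = 0 := by
          rcases hy' with h | h
          · have e1 : η₀ (y - x m) = 1 := ηabs1 _ (by rw [abs_le]; constructor <;> linarith)
            have e2 : η₀ (y - x (m+1)) = 0 := by
              apply ηabs0
              rw [abs_sub_comm]
              have h2 := le_abs_self (x (m+1) - y)
              linarith
            rw [e1, e2]; ring
          · have e1 : η₀ (y - x (m+1)) = 1 := ηabs1 _ (by rw [abs_le]; constructor <;> linarith)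
            have e2 : η₀ (y - x m) = 0 := by
              apply ηabs0
              have h2 := le_abs_self (y - x m)
              linarith
            rw [e1, e2]; ring
        rw [hRHS, mul_zero]
        apply Finset.sum_eq_zero
        intro l hl
        have hln : l ≤ n := Nat.lt_succ_iff.mp (Finset.mem_range.mp hl)
        by_cases hyl : y ∈ Set.Ico (x l) (x (l+1))
        · rcases hy' with h | h
          · -- y < x m : necessarily l + 1 = m
            have hl1m : l + 1 = m := by
              by_contra hne
              rcases Nat.lt_or_ge (l+1) m with hc | hc
              · have := hgap' (l+1) m hc (by omega)
                have := hyl.2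
                linarith
              · have hlm : m ≤ l := by omega
                have := hle l (by omega) m hlm
                have := hyl.1
                linarith
            have e1 : η₀ (y - x (l+1)) = 1 := by
              rw [hl1m]; exact ηabs1 _ (by rw [abs_le]; constructor <;> linarith)
            have e2 : η₀ (y - x l) = 0 := by
              apply ηabs0
              have h2 := le_abs_self (y - x l)
              have h3 := hgap' l m (by omega) (by omega)
              linarith
            rw [e1, e2]
            ring
          · -- x (m+1) ≤ y : necessarily l = m + 1
            have hlm1 : l = m + 1 := by
              by_contra hne
              rcases Nat.lt_or_ge l (m+1) with hc | hc
              · have := hle (m+1) (by omega) (l+1) (by omega)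
                have := hyl.2
                linarith
              · have hc' : m + 1 < l := by omega
                have := hgap' (m+1) l hc' (by omega)
                have := hyl.1
                linarith
            have e1 : η₀ (y - x l) = 1 := by
              rw [hlm1]; exact ηabs1 _ (by rw [abs_le]; constructor <;> linarith)
            have e2 : η₀ (y - x (l+1)) = 0 := by
              apply ηabs0
              rw [abs_sub_comm]
              have h2 := le_abs_self (x (l+1) - y)
              have h3 := hgap l hln
              have h4 : x (m+1) ≤ x l := by rw [hlm1]
              linarith
            rw [e1, e2]
            ring
        · rw [Set.indicator_of_notMem hyl, mul_zero, zero_mul]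
    rw [hs1, hs2]
  -- covering lemma
  have hcover : ∀ y ∈ Set.Icc (0:ℝ) 1, ∃ m, m ≤ n ∧ x m ≤ y ∧ y ≤ x (m+1) := by
    intro y hy
    have hP0 : (fun l => x l ≤ y) 0 := by simpa [hx0] using hy.1
    refine ⟨Nat.findGreatest (fun l => x l ≤ y) n, Nat.findGreatest_le n,
      Nat.findGreatest_spec (P := fun l => x l ≤ y) (Nat.zero_le n) hP0, ?_⟩
    rcases Nat.lt_or_ge (Nat.findGreatest (fun l => x l ≤ y) n) n with h | h
    · have hng := Nat.findGreatest_is_greatest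
        (Nat.lt_succ_self (Nat.findGreatest (fun l => x l ≤ y) n)) (by omega)
      simp only [not_le] at hng
      linarith
    · have hmn' : Nat.findGreatest (fun l => x l ≤ y) n = n :=
        le_antisymm (Nat.findGreatest_le n) h
      rw [hmn', hxn]
      exact hy.2
  refine ⟨?_, ?_, ?_⟩
  · -- smoothness
    intro y hy
    obtain ⟨m, hm, hy1, hy2⟩ := hcover y hy
    have hnb : Set.Ioo (x m - ρ/2) (x (m+1) + ρ/2) ∈ nhds y :=
      Ioo_mem_nhds (by linarith) (by linarith)
    have heq : w =ᶠ[nhds y] fun z =>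
        η₀ (z - x m) * (α m * (z - x m) + β m / 2 * (z - x m)^2)
        + η₀ (z - x (m+1)) * (α (m+1) * (z - x (m+1)) + β (m+1) / 2 * (z - x (m+1))^2)
        + α m * (1 - (η₀ (z - x m) + η₀ (z - x (m+1)))) :=
      Filter.eventuallyEq_of_mem hnb (fun z hz => lemB m hm z hz.1 hz.2)
    apply ContDiffAt.contDiffWithinAt
    apply ContDiffAt.congr_of_eventuallyEq _ heq
    apply ContDiff.contDiffAt
    have hb1 : ∀ c : ℝ, ContDiff ℝ (⊤ : ℕ∞) fun z : ℝ => η₀ (z - c) :=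
      fun c => hη.comp (contDiff_id.sub contDiff_const)
    have hpoly : ∀ (c A B : ℝ), ContDiff ℝ (⊤ : ℕ∞) fun z : ℝ => A * (z - c) + B / 2 * (z - c)^2 :=
      fun c A B => (contDiff_const.mul (contDiff_id.sub contDiff_const)).add
        (contDiff_const.mul ((contDiff_id.sub contDiff_const).pow 2))
    exact (((hb1 (x m)).mul (hpoly (x m) (α m) (β m))).add
      ((hb1 (x (m+1))).mul (hpoly (x (m+1)) (α (m+1)) (β (m+1))))).add
      (contDiff_const.mul (contDiff_const.sub ((hb1 (x m)).add (hb1 (x (m+1))))))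
  · -- zero set
    intro y hy
    constructor
    · intro hwy
      obtain ⟨m, hm, hy1, hy2⟩ := hcover y hy
      rcases le_or_gt y (x m + ρ/2) with hc1 | hc1
      · -- close to x m
        have habs : |y - x m| ≤ ρ/2 := abs_le.mpr ⟨by linarith, by linarith⟩
        have hA' := lemA m (by omega) y habs
        rw [hA'] at hwy
        refine ⟨m, by omega, ?_⟩
        by_contra hne
        have hAsq := αsq m (by omega)
        have h0 : α m + β m / 2 * (y - x m) = 0 := by
          rcases mul_eq_zero.mp (show (y - x m) * (α m + β m / 2 * (y - x m)) = 0 by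
            linear_combination hwy) with h | h
          · exact absurd h (sub_ne_zero.mpr hne)
          · exact h
        have h0' : 1 + (α m * β m)/2 * (y - x m) = 0 := by
          linear_combination α m * h0 - hAsq
        have hcm : |α m * β m| ≤ 1 := by
          rw [abs_mul, αabs m (by omega), one_mul]; exact βabs m (by omega)
        obtain ⟨hc2, hc3⟩ := abs_le.mp hcm
        obtain ⟨hd1, hd2⟩ := abs_le.mp habs
        exfalso
        nlinarith [mul_nonneg (by linarith : (0:ℝ) ≤ 1 + α m * β m)
            (by linarith : (0:ℝ) ≤ ρ/2 + (y - x m)),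
          mul_nonneg (by linarith : (0:ℝ) ≤ 1 - α m * β m)
            (by linarith : (0:ℝ) ≤ ρ/2 - (y - x m))]
      rcases le_or_gt (x (m+1) - ρ/2) y with hc2 | hc2
      · -- close to x (m+1)
        have habs : |y - x (m+1)| ≤ ρ/2 := abs_le.mpr ⟨by linarith, by linarith⟩
        have hA' := lemA (m+1) (by omega) y habs
        rw [hA'] at hwy
        refine ⟨m+1, by omega, ?_⟩
        by_contra hne
        have hAsq := αsq (m+1) (by omega)
        have h0 : α (m+1) + β (m+1) / 2 * (y - x (m+1)) = 0 := by
          rcases mul_eq_zero.mp (show (y - x (m+1)) * (α (m+1) + β (m+1) / 2 * (y - x (m+1))) = 0 by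
            linear_combination hwy) with h | h
          · exact absurd h (sub_ne_zero.mpr hne)
          · exact h
        have h0' : 1 + (α (m+1) * β (m+1))/2 * (y - x (m+1)) = 0 := by
          linear_combination α (m+1) * h0 - hAsq
        have hcm : |α (m+1) * β (m+1)| ≤ 1 := by
          rw [abs_mul, αabs (m+1) (by omega), one_mul]; exact βabs (m+1) (by omega)
        obtain ⟨hc3, hc4⟩ := abs_le.mp hcm
        obtain ⟨hd1, hd2⟩ := abs_le.mp habs
        exfalso
        nlinarith [mul_nonneg (by linarith : (0:ℝ) ≤ 1 + α (m+1) * β (m+1))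
            (by linarith : (0:ℝ) ≤ ρ/2 + (y - x (m+1))),
          mul_nonneg (by linarith : (0:ℝ) ≤ 1 - α (m+1) * β (m+1))
            (by linarith : (0:ℝ) ≤ ρ/2 - (y - x (m+1)))]
      · -- middle region: w has the sign of α m, contradiction
        exfalso
        have hm1 : m ≤ n+1 := by omega
        have hB := lemB m hm y (by linarith) (by linarith)
        have hA := αsq m hm1
        have hAB := αprod m hm
        have hgm := hgap m hm
        have ht1 : ρ/2 < y - x m := by linarith
        have hs1' : ρ/2 < x (m+1) - y := by linarith
        have hcm : |α m * β m| ≤ 1 := by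
          rw [abs_mul, αabs m hm1, one_mul]; exact βabs m hm1
        obtain ⟨hcm1, hcm2⟩ := abs_le.mp hcm
        have hcm' : |α m * β (m+1)| ≤ 1 := by
          rw [abs_mul, αabs m hm1, one_mul]; exact βabs (m+1) (by omega)
        obtain ⟨hcn1, hcn2⟩ := abs_le.mp hcm'
        have ha0 := (h01 (y - x m)).1
        have ha1 := (h01 (y - x m)).2
        have hb0 := (h01 (y - x (m+1))).1
        have hb1 := (h01 (y - x (m+1))).2
        have hat : η₀ (y - x m) ≠ 0 → y - x m < ρ := by
          intro h; by_contra h'; push_neg at h'; exact h (hzero _ h')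
        have hbt : η₀ (y - x (m+1)) ≠ 0 → x (m+1) - y < ρ := by
          intro h; by_contra h'; push_neg at h'
          refine h ?_
          rw [show y - x (m+1) = -(x (m+1) - y) by ring, heven]
          exact hzero _ h'
        have key : α m * w y =
            η₀ (y - x m) * (α m * (α m * (y - x m) + β m / 2 * (y - x m)^2))
            + η₀ (y - x (m+1)) * (α m * (α (m+1) * (y - x (m+1)) + β (m+1) / 2 * (y - x (m+1))^2))
            + (1 - (η₀ (y - x m) + η₀ (y - x (m+1)))) := by
          rw [hB]
          linear_combination (1 - (η₀ (y - x m) + η₀ (y - x (m+1)))) * hA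
        rw [hwy, mul_zero] at key
        have hQ1 : η₀ (y - x m) ≠ 0 →
            0 < α m * (α m * (y - x m) + β m / 2 * (y - x m)^2) := by
          intro h
          have htρ := hat h
          have e : α m * (α m * (y - x m) + β m / 2 * (y - x m)^2)
              = (y - x m) + (α m * β m)/2 * (y - x m)^2 := by
            linear_combination (y - x m) * hA
          rw [e]
          nlinarith [mul_nonneg (by linarith : (0:ℝ) ≤ 1 + α m * β m) (sq_nonneg (y - x m)),
            mul_pos (by linarith : (0:ℝ) < y - x m) (by linarith : (0:ℝ) < 1/2 - (y - x m))]
        have hQ2 : η₀ (y - x (m+1)) ≠ 0 →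
            0 < α m * (α (m+1) * (y - x (m+1)) + β (m+1) / 2 * (y - x (m+1))^2) := by
          intro h
          have hsρ := hbt h
          have e : α m * (α (m+1) * (y - x (m+1)) + β (m+1) / 2 * (y - x (m+1))^2)
              = -(y - x (m+1)) + (α m * β (m+1))/2 * (y - x (m+1))^2 := by
            linear_combination (y - x (m+1)) * hAB
          rw [e]
          nlinarith [mul_nonneg (by linarith : (0:ℝ) ≤ 1 + α m * β (m+1)) (sq_nonneg (y - x (m+1))),
            mul_pos (by linarith : (0:ℝ) < -(y - x (m+1)))
              (by linarith : (0:ℝ) < 1/2 + (y - x (m+1)))]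
        rcases eq_or_ne (η₀ (y - x m)) 0 with ha | ha
        · rcases eq_or_ne (η₀ (y - x (m+1))) 0 with hb | hb
          · rw [ha, hb] at key
            norm_num at key
          · have h2 := hQ2 hb
            have hbpos : 0 < η₀ (y - x (m+1)) := lt_of_le_of_ne hb0 (Ne.symm hb)
            rw [ha] at key
            nlinarith [mul_pos hbpos h2]
        · have h2 := hQ1 ha
          have hapos : 0 < η₀ (y - x m) := lt_of_le_of_ne ha0 (Ne.symm ha)
          have hb : η₀ (y - x (m+1)) = 0 := by
            by_contra hb
            have := hat ha
            have := hbt hb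
            linarith
          rw [hb] at key
          nlinarith [mul_pos hapos h2]
    · rintro ⟨l, hl, rfl⟩
      rw [lemA l hl (x l) (by rw [sub_self, abs_zero]; positivity)]
      simp
  · -- derivatives
    intro l hl
    have hder1 : ∀ z : ℝ, HasDerivAt (fun u => α l * (u - x l) + β l / 2 * (u - x l)^2)
        (α l + β l * (z - x l)) z := by
      intro z
      have h1 : HasDerivAt (fun u : ℝ => u - x l) 1 z := (hasDerivAt_id z).sub_const _
      have h2 := h1.const_mul (α l)
      have h3 := (h1.pow 2).const_mul (β l / 2)
      have h4 := h2.add h3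
      refine h4.congr_deriv ?_
      push_cast
      ring
    have hnb : Set.Ioo (x l - ρ/2) (x l + ρ/2) ∈ nhds (x l) :=
      Ioo_mem_nhds (by linarith) (by linarith)
    have heq : w =ᶠ[nhds (x l)] fun u => α l * (u - x l) + β l / 2 * (u - x l)^2 :=
      Filter.eventuallyEq_of_mem hnb (fun z hz =>
        lemA l hl z (abs_le.mpr ⟨by linarith [hz.1], by linarith [hz.2]⟩))
    constructor
    · rw [heq.deriv_eq, (hder1 (x l)).deriv]
      simp
    · have h2 : deriv w =ᶠ[nhds (x l)] fun z => α l + β l * (z - x l) :=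
        heq.deriv.trans (Filter.Eventually.of_forall fun z => (hder1 z).deriv)
      rw [h2.deriv_eq]
      have h3 : HasDerivAt (fun z : ℝ => α l + β l * (z - x l)) (β l) (x l) := by
        have h1 : HasDerivAt (fun z : ℝ => z - x l) 1 (x l) := (hasDerivAt_id _).sub_const _
        have h4 := (h1.const_mul (β l)).const_add (α l)
        refine h4.congr_deriv ?_
        ring
      rw [h3.deriv]
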